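/- Restricted eigenvalue controls the projected Gram matrix. Let X ∈ ℝ^{n×p}, let S* ⊆ {1,…,p} with |S*| = k and 2k ≤ p, and define the restricted eigenvalue ρ_{2k} = min { ‖X_A v‖₂² / (n‖v‖₂²) : S* ⊆ A ⊆ {1,…,p}, |A| = 2k, v ∈ ℝ^{2k}, v ≠ 0 }. Let Ŝ ⊆ {1,…,p} satisfy |Ŝ ∪ S*| ≤ 2k and X_Ŝ of full column rank, and set B = S* \ Ŝ, assumed nonempty. Then for every v ∈ ℝ^{|B|}, vᵀ X_Bᵀ Π⊥[Ŝ] X_B v ≥ n ρ_{2k} ‖v‖₂²; in particular, the smallest eigenvalue of X_Bᵀ Π⊥[Ŝ] X_B is at least n ρ_{2k}. -/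

import Mathlib

open scoped RealInnerProductSpace

/-- `Π⊥[S] v`: the orthogonal projection of `v` onto the orthogonal complement of the
column span of the columns of `X` indexed by `S` (so `Π⊥[∅] = id`). -/
noncomputable def projPerp {n p : ℕ} (X : Fin p → EuclideanSpace ℝ (Fin n))
    (S : Finset (Fin p)) (v : EuclideanSpace ℝ (Fin n)) : EuclideanSpace ℝ (Fin n) :=
  v - ((Submodule.span ℝ (X '' ↑S)).orthogonalProjection v : EuclideanSpace ℝ (Fin n))

/-- Restricted eigenvalue
`ρ_{2k} = min { ‖X_A v‖²/(n‖v‖²) : S* ⊆ A ⊆ {1,…,p}, |A| = 2k, v ≠ 0 }`, where the vector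
`v ∈ ℝ^{2k}` is encoded as a vector of `ℝ^p` supported on `A`. -/
noncomputable def restrictedEig {n p : ℕ} (X : Fin p → EuclideanSpace ℝ (Fin n))
    (Sstar : Finset (Fin p)) (k : ℕ) : ℝ :=
  sInf { r : ℝ | ∃ A : Finset (Fin p), Sstar ⊆ A ∧ A.card = 2 * k ∧
    ∃ v : Fin p → ℝ, v ≠ 0 ∧ (∀ j ∉ A, v j = 0) ∧
      r = ‖(∑ j, v j • X j : EuclideanSpace ℝ (Fin n))‖ ^ 2 / ((n : ℝ) * ∑ j, v j ^ 2) }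

/-!
Write `X_B v = ∑ c_j X_j` with `c` the extension of `v` by zero. Its residual `Π⊥[Ŝ] X_B v`
is `X_B v − X_Ŝ α` for some `α`, i.e. `∑ (c_j − α_j) X_j` with `c − α` supported on
`Ŝ ∪ S*`, a set containing `S*` of size at most `2k`; it also agrees with `v` on `B`, which
is disjoint from `Ŝ`. Enlarging the support to a set of size exactly `2k` (possible as
`2k ≤ p`), the definition of `ρ_{2k}` gives
`⟨X_B v, Π⊥[Ŝ] X_B v⟩ = ‖∑ (c_j − α_j) X_j‖² ≥ n ρ_{2k} ‖c − α‖² ≥ n ρ_{2k} ‖v‖²`.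
-/

theorem Submodule.exists_fun_of_mem_span_image {ι R M : Type*} [Fintype ι] [Semiring R]
    [AddCommMonoid M] [Module R M] {v : ι → M} {s : Set ι} {x : M}
    (hx : x ∈ Submodule.span R (v '' s)) :
    ∃ c : ι → R, (∀ i ∉ s, c i = 0) ∧ ∑ i, c i • v i = x := by
  obtain ⟨l, hl, rfl⟩ := Finsupp.mem_span_image_iff_linearCombination R |>.1 hx
  exact ⟨l, (Finsupp.mem_supported' R l).1 hl,
    by rw [Finsupp.linearCombination_apply, Finsupp.sum_fintype _ _ (by simp)]⟩

section ProjPerp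

variable {n p : ℕ} (X : Fin p → EuclideanSpace ℝ (Fin n)) (S : Finset (Fin p))

theorem projPerp_eq_starProjection_orthogonal (w : EuclideanSpace ℝ (Fin n)) :
    projPerp X S w = (Submodule.span ℝ (X '' ↑S))ᗮ.starProjection w := by
  rw [Submodule.starProjection_orthogonal_val]
  rfl

theorem inner_projPerp_self (w : EuclideanSpace ℝ (Fin n)) :
    ⟪w, projPerp X S w⟫ = ‖projPerp X S w‖ ^ 2 := by
  rw [projPerp_eq_starProjection_orthogonal, real_inner_comm,
    ← RCLike.re_to_real (x := ⟪_, _⟫), Submodule.re_inner_starProjection_eq_normSq]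
  rfl

theorem exists_projPerp_sum_smul_eq (c : Fin p → ℝ) :
    ∃ α : Fin p → ℝ, (∀ j ∉ S, α j = 0) ∧
      projPerp X S (∑ j, c j • X j) = ∑ j, (c j - α j) • X j := by
  set K := Submodule.span ℝ (X '' ↑S)
  obtain ⟨α, hα, hsum⟩ := Submodule.exists_fun_of_mem_span_image
    (K.starProjection_apply_mem (∑ j, c j • X j))
  refine ⟨α, hα, ?_⟩
  simp only [sub_smul, Finset.sum_sub_distrib, hsum]
  rfl

end ProjPerp

section RestrictedEig

variable {n p : ℕ} (X : Fin p → EuclideanSpace ℝ (Fin n)) (Sstar : Finset (Fin p)) (k : ℕ)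

theorem restrictedEig_nonneg : 0 ≤ restrictedEig X Sstar k := by
  refine Real.sInf_nonneg ?_
  rintro r ⟨A, -, -, u, -, -, rfl⟩
  positivity

theorem restrictedEig_le {A : Finset (Fin p)} (hA : Sstar ⊆ A) (hAcard : A.card = 2 * k)
    {u : Fin p → ℝ} (hu0 : u ≠ 0) (hu : ∀ j ∉ A, u j = 0) :
    restrictedEig X Sstar k ≤ ‖∑ j, u j • X j‖ ^ 2 / (n * ∑ j, u j ^ 2) := by
  refine csInf_le ⟨0, ?_⟩ ⟨A, hA, hAcard, u, hu0, hu, rfl⟩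
  rintro r ⟨A, -, -, u, -, -, rfl⟩
  positivity

theorem mul_restrictedEig_mul_sum_sq_le {T : Finset (Fin p)} (hT : Sstar ⊆ T)
    (hTcard : T.card ≤ 2 * k) (h2k : 2 * k ≤ p) {u : Fin p → ℝ} (hu : ∀ j ∉ T, u j = 0) :
    n * restrictedEig X Sstar k * ∑ j, u j ^ 2 ≤ ‖∑ j, u j • X j‖ ^ 2 := by
  rcases eq_or_ne u 0 with rfl | hu0
  · simp
  rcases Nat.eq_zero_or_pos n with rfl | hn
  · simp
  obtain ⟨A, hTA, hAcard⟩ := Finset.exists_superset_card_eq hTcard (by simpa using h2k)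
  have hden : 0 < (n : ℝ) * ∑ j, u j ^ 2 := by
    obtain ⟨j, hj⟩ := Function.ne_iff.1 hu0
    exact mul_pos (by exact_mod_cast hn)
      (Finset.sum_pos' (fun j _ => sq_nonneg _)
        ⟨j, Finset.mem_univ j, pow_two_pos_of_ne_zero hj⟩)
  rw [mul_assoc, mul_left_comm, ← le_div_iff₀ hden]
  exact restrictedEig_le X Sstar k (hT.trans hTA) hAcard hu0 fun j hj => hu j (mt (@hTA j) hj)

end RestrictedEig

theorem restricted_eig_controls_projected_gram_general {n p k : ℕ}
    (X : Fin p → EuclideanSpace ℝ (Fin n))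
    (Sstar : Finset (Fin p)) (h2k : 2 * k ≤ p)
    (Shat : Finset (Fin p)) (hcard : (Shat ∪ Sstar).card ≤ 2 * k)
    (B : Finset (Fin p)) (hB : B = Sstar \ Shat)
    (v : {i : Fin p // i ∈ B} → ℝ) :
    ⟪(∑ j ∈ B.attach, v j • X j.1 : EuclideanSpace ℝ (Fin n)),
        projPerp X Shat (∑ j ∈ B.attach, v j • X j.1)⟫
      ≥ (n : ℝ) * restrictedEig X Sstar k * ∑ i ∈ B.attach, v i ^ 2 := by
  classical
  set c : Fin p → ℝ := fun j => if h : j ∈ B then v ⟨j, h⟩ else 0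
  have hw : ∑ j ∈ B.attach, v j • X j.1 = ∑ j, c j • X j := by
    rw [Finset.sum_attach_eq_sum_dite]
    exact Finset.sum_congr rfl fun j _ => by by_cases h : j ∈ B <;> simp [c, h]
  obtain ⟨α, hα, hres⟩ := exists_projPerp_sum_smul_eq X Shat c
  have hBShat : ∀ j ∈ B, j ∉ Shat := fun j hj => (Finset.mem_sdiff.1 (hB ▸ hj)).2
  have hsupp : ∀ j ∉ Shat ∪ Sstar, c j - α j = 0 := by
    intro j hj
    rw [Finset.mem_union, not_or] at hj
    have hjB : j ∉ B := fun h => hj.2 (Finset.mem_sdiff.1 (hB ▸ h)).1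
    simp [c, hjB, hα j hj.1]
  have hsq : ∑ i ∈ B.attach, v i ^ 2 ≤ ∑ j, (c j - α j) ^ 2 := by
    rw [Finset.sum_attach_eq_sum_dite]
    refine Finset.sum_le_sum fun j _ => ?_
    by_cases h : j ∈ B
    · simp [c, h, hα j (hBShat j h)]
    · simpa [h] using sq_nonneg _
  rw [hw, ge_iff_le, inner_projPerp_self, hres]
  calc (n : ℝ) * restrictedEig X Sstar k * ∑ i ∈ B.attach, v i ^ 2
      ≤ n * restrictedEig X Sstar k * ∑ j, (c j - α j) ^ 2 := by
        have hρ := restrictedEig_nonneg X Sstar k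
        gcongr
    _ ≤ ‖∑ j, (c j - α j) • X j‖ ^ 2 :=
        mul_restrictedEig_mul_sum_sq_le X Sstar k Finset.subset_union_right hcard h2k hsupp

/-- **Restricted eigenvalue controls the projected Gram matrix.**  If `|S*| = k`,
`2k ≤ p`, `|Ŝ ∪ S*| ≤ 2k`, `X_Ŝ` has full column rank, and `B = S* \ Ŝ` is nonempty, then
for every `v`, `vᵀ X_Bᵀ Π⊥[Ŝ] X_B v ≥ n ρ_{2k} ‖v‖²`; in particular the smallest
eigenvalue of `X_Bᵀ Π⊥[Ŝ] X_B` is at least `n ρ_{2k}`. -/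
theorem restricted_eig_controls_projected_gram {n p k : ℕ}
    (X : Fin p → EuclideanSpace ℝ (Fin n))
    (Sstar : Finset (Fin p)) (hk : Sstar.card = k) (h2k : 2 * k ≤ p)
    (Shat : Finset (Fin p)) (hcard : (Shat ∪ Sstar).card ≤ 2 * k)
    (hShat : LinearIndependent ℝ (fun i : (Shat : Set (Fin p)) => X i))
    (B : Finset (Fin p)) (hB : B = Sstar \ Shat) (hBne : B.Nonempty)
    (v : {i : Fin p // i ∈ B} → ℝ) :
    ⟪(∑ j ∈ B.attach, v j • X j.1 : EuclideanSpace ℝ (Fin n)),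
        projPerp X Shat (∑ j ∈ B.attach, v j • X j.1)⟫
      ≥ (n : ℝ) * restrictedEig X Sstar k * ∑ i ∈ B.attach, v i ^ 2 :=
  restricted_eig_controls_projected_gram_general X Sstar h2k Shat hcard B hB v
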